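/- Let A_1, A_2 ∈ ℝ^{n×n}, B_1, B_2 ∈ ℝ^{n×p}. Let Ω ⊆ (ℂ ∖ σ(A_1)) × (ℂ ∖ σ(A_2)) be such that Ω ∩ (ℝ×ℝ) is dense in ℝ×ℝ, and let P ∈ ℝ[X,Y]^{n×r} be such that for every (λ,μ) ∈ Ω the ℂ-linear span of the columns of P(λ,μ) equals V_{A_1,B_1}(λ) ∩ V_{A_2,B_2}(μ). Write P(λ,μ) = Σ_{k=0}^{N} Σ_{l=0}^{N} C_{kl} λ^k μ^l with coefficient matrices C_{kl} ∈ ℝ^{n×r}. Then the pairs (A_1,B_1) and (A_2,B_2) are feedback rectifiable over Ω if and only if the only α ∈ ℝ^n satisfying αᵀC_{kl} = 0 for all k, l ∈ {0,…,N} is α = 0. -/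

import Mathlib

/-!
An eigenvector of `A + B F` for `λ` lies in `V_{A,B}(λ)`. Conversely, for real `x`, a real
`v ∈ V_{A,B}(x)` satisfies `B u = x v - A v` for some real input `u`, and a feedback prescribed on
a basis realises all these inputs at once.

If the pairs are rectifiable, the common eigenvectors are a basis of `ℂⁿ` lying in the column
spaces of the `P(λᵢ, μᵢ)`, so a real `α` annihilating every `C_{kl}` is orthogonal to `ℂⁿ`.
Conversely, a real `α` orthogonal to all real columns of `P(x, y)`, `(x, y) ∈ Ω ∩ ℝ²`, makes
`αᵀ P` a polynomial vanishing on a dense set, so every `αᵀ C_{kl}` vanishes. Hence, when only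
`α = 0` annihilates the `C_{kl}`, these columns span `ℝⁿ`, and a basis chosen among them is a
common eigenbasis for suitable real feedbacks.
-/

open Matrix

noncomputable section

/-- Entrywise coercion of a real matrix to a complex matrix. -/
def mapC {n m : ℕ} (A : Matrix (Fin n) (Fin m) ℝ) : Matrix (Fin n) (Fin m) ℂ :=
  A.map (fun x => (x : ℂ))

/-- `V_{A,B}(λ) = {v ∈ ℂ^n : (λI − A)v ∈ range B}`. -/
def Vsp {n p : ℕ} (A : Matrix (Fin n) (Fin n) ℝ) (B : Matrix (Fin n) (Fin p) ℝ) (l : ℂ) :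
    Submodule ℂ (Fin n → ℂ) :=
  Submodule.comap (l • (1 : Matrix (Fin n) (Fin n) ℂ) - mapC A).mulVecLin
    (LinearMap.range (mapC B).mulVecLin)

/-- The pairs `(A₁,B₁)` and `(A₂,B₂)` are feedback rectifiable over `D ⊆ ℂ × ℂ`. -/
def FeedbackRectifiable {n p : ℕ} (A₁ A₂ : Matrix (Fin n) (Fin n) ℝ)
    (B₁ B₂ : Matrix (Fin n) (Fin p) ℝ) (D : Set (ℂ × ℂ)) : Prop :=
  ∃ (F₁ F₂ : Matrix (Fin p) (Fin n) ℝ) (lm : Fin n → ℂ × ℂ) (v : Fin n → Fin n → ℂ),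
    (∀ i, lm i ∈ D) ∧ LinearIndependent ℂ v ∧
    (∀ i, (mapC (A₁ + B₁ * F₁)).mulVec (v i) = (lm i).1 • v i) ∧
    (∀ i, (mapC (A₂ + B₂ * F₂)).mulVec (v i) = (lm i).2 • v i)

/-- Entrywise evaluation of a matrix of real polynomials in two variables at a point of `ℂ²`. -/
def evalPC {n r : ℕ} (P : Matrix (Fin n) (Fin r) (MvPolynomial (Fin 2) ℝ)) (lam mu : ℂ) :
    Matrix (Fin n) (Fin r) ℂ :=
  P.map (MvPolynomial.aeval ![lam, mu])

open Finset

section Polynomial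

variable {R : Type*} [CommRing R] [IsDomain R] [Infinite R] {N : ℕ}

theorem eq_zero_of_forall_sum_pow_mul_eq_zero {a : ℕ → R}
    (h : ∀ x : R, ∑ k ∈ range (N + 1), x ^ k * a k = 0) {k : ℕ} (hk : k ≤ N) : a k = 0 := by
  have hq : ∑ k ∈ range (N + 1), Polynomial.X ^ k * Polynomial.C (a k) = 0 :=
    Polynomial.funext fun x => by
      simpa only [Polynomial.eval_finsetSum, Polynomial.eval_mul, Polynomial.eval_pow,
        Polynomial.eval_X, Polynomial.eval_C, Polynomial.eval_zero] using h x
  simpa [Polynomial.finsetSum_coeff, Polynomial.X_pow_mul, Polynomial.coeff_C_mul_X_pow,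
    Nat.lt_succ_iff, hk] using congrArg (Polynomial.coeff · k) hq

theorem eq_zero_of_forall_sum_pow_mul_pow_mul_eq_zero {a : ℕ → ℕ → R}
    (h : ∀ x y : R, ∑ k ∈ range (N + 1), ∑ l ∈ range (N + 1), (x ^ k * y ^ l) * a k l = 0)
    {k l : ℕ} (hk : k ≤ N) (hl : l ≤ N) : a k l = 0 := by
  have hrow (y : R) : ∑ l ∈ range (N + 1), y ^ l * a k l = 0 :=
    eq_zero_of_forall_sum_pow_mul_eq_zero (a := fun k => ∑ l ∈ range (N + 1), y ^ l * a k l)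
      (fun x => by simpa only [mul_sum, mul_assoc] using h x y) hk
  exact eq_zero_of_forall_sum_pow_mul_eq_zero hrow hl

end Polynomial

theorem eq_zero_of_sum_pow_mul_pow_mul_eq_zero_on_dense {S : Set (ℝ × ℝ)} (hS : Dense S) {N : ℕ}
    {a : ℕ → ℕ → ℝ}
    (h : ∀ z ∈ S, ∑ k ∈ range (N + 1), ∑ l ∈ range (N + 1), (z.1 ^ k * z.2 ^ l) * a k l = 0)
    {k l : ℕ} (hk : k ≤ N) (hl : l ≤ N) : a k l = 0 := by
  have hcont : Continuous fun z : ℝ × ℝ =>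
      ∑ k ∈ range (N + 1), ∑ l ∈ range (N + 1), (z.1 ^ k * z.2 ^ l) * a k l := by
    fun_prop
  have hzero := hcont.ext_on hS continuous_const h
  exact eq_zero_of_forall_sum_pow_mul_pow_mul_eq_zero (fun x y => congrFun hzero (x, y)) hk hl

section CoeffMatrices

variable {R m q : Type*} [CommSemiring R] [Fintype m]

def evalCoeffs (C : ℕ → ℕ → Matrix m q R) (N : ℕ) (x y : R) : Matrix m q R :=
  ∑ k ∈ range (N + 1), ∑ l ∈ range (N + 1), (x ^ k * y ^ l) • C k l

theorem vecMul_evalCoeffs (v : m → R) (C : ℕ → ℕ → Matrix m q R) (N : ℕ) (x y : R) :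
    v ᵥ* evalCoeffs C N x y =
      ∑ k ∈ range (N + 1), ∑ l ∈ range (N + 1), (x ^ k * y ^ l) • (v ᵥ* C k l) := by
  simp only [evalCoeffs, vecMul_sum, vecMul_smul]

theorem vecMul_evalCoeffs_eq_zero {v : m → R} {C : ℕ → ℕ → Matrix m q R} {N : ℕ}
    (h : ∀ k l, k ≤ N → l ≤ N → v ᵥ* C k l = 0) (x y : R) : v ᵥ* evalCoeffs C N x y = 0 := by
  rw [vecMul_evalCoeffs]
  refine sum_eq_zero fun k hk => sum_eq_zero fun l hl => ?_
  rw [h k l (Nat.lt_succ_iff.mp (mem_range.mp hk)) (Nat.lt_succ_iff.mp (mem_range.mp hl)),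
    smul_zero]

end CoeffMatrices

theorem Submodule.span_eq_top_of_forall_dotProduct_eq_zero {K ι : Type*} [Field K] [Fintype ι]
    [DecidableEq ι] {T : Set (ι → K)} (h : ∀ α : ι → K, (∀ w ∈ T, α ⬝ᵥ w = 0) → α = 0) :
    span K T = ⊤ := by
  by_contra hT
  obtain ⟨f, hf, hle⟩ := (span K T).exists_le_ker_of_lt_top (lt_top_iff_ne_top.mpr hT)
  set α := (dotProductEquiv K ι).symm f
  have hfα : dotProductEquiv K ι α = f := (dotProductEquiv K ι).apply_symm_apply f
  have hα : α = 0 := h α fun w hw => by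
    rw [← dotProductEquiv_apply_apply, hfα]
    exact hle (subset_span hw)
  exact hf (by rw [← hfα, hα, map_zero])

theorem span_col_evalCoeffs_eq_top {m q : Type*} [Fintype m] [DecidableEq m]
    {C : ℕ → ℕ → Matrix m q ℝ} {N : ℕ} {S : Set (ℝ × ℝ)} (hS : Dense S)
    (hker : ∀ α : m → ℝ, (∀ k l, k ≤ N → l ≤ N → α ᵥ* C k l = 0) → α = 0) :
    Submodule.span ℝ {w | ∃ z ∈ S, ∃ j, w = (evalCoeffs C N z.1 z.2).col j} = ⊤ := by
  refine Submodule.span_eq_top_of_forall_dotProduct_eq_zero fun α hα =>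
    hker α fun k l hk hl => funext fun j => ?_
  refine eq_zero_of_sum_pow_mul_pow_mul_eq_zero_on_dense (a := fun k l => (α ᵥ* C k l) j) hS
    (fun z hz => ?_) hk hl
  have hzj : (α ᵥ* evalCoeffs C N z.1 z.2) j = 0 := hα _ ⟨z, hz, j, rfl⟩
  simpa [vecMul_evalCoeffs, Finset.sum_apply] using hzj

theorem Module.Basis.exists_mem_of_span_eq_top {K ι : Type*} [Field K] [Fintype ι]
    {T : Set (ι → K)} (hT : Submodule.span K T = ⊤) : ∃ b : Basis ι K (ι → K), ∀ i, b i ∈ T := by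
  let b := Basis.ofSpan hT.ge
  refine ⟨b.reindex (b.indexEquiv (Pi.basisFun K ι)), fun i => ?_⟩
  rw [Basis.reindex_apply]
  exact Basis.ofSpan_subset hT.ge (Set.mem_range_self _)

theorem LinearIndependent.eq_zero_of_forall_dotProduct_eq_zero {K ι : Type*} [Field K]
    [Fintype ι] [DecidableEq ι] {v : ι → ι → K} (hv : LinearIndependent K v) {α : ι → K}
    (h : ∀ i, v i ⬝ᵥ α = 0) : α = 0 := by
  have hunit : IsUnit (Matrix.of v) := linearIndependent_rows_iff_isUnit.mp hv
  refine mulVec_injective_iff_isUnit.mpr hunit ?_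
  rw [mulVec_zero]
  exact funext h

theorem LinearIndependent.ofReal_comp {ι : Type*} [Fintype ι] [DecidableEq ι]
    {v : ι → ι → ℝ} (hv : LinearIndependent ℝ v) :
    LinearIndependent ℂ fun i => Complex.ofReal ∘ v i := by
  have hunit : IsUnit (Matrix.of v) := linearIndependent_rows_iff_isUnit.mp hv
  exact linearIndependent_rows_iff_isUnit.mpr (hunit.map Complex.ofRealHom.mapMatrix)

theorem exists_feedback_of_basis {K ι ι' m : Type*} [Field K] [Fintype ι] [DecidableEq ι]
    [Fintype m] (A : Matrix ι ι K) (B : Matrix ι m K) (b : Module.Basis ι' K (ι → K)) (x : ι' → K)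
    (hu : ∀ i, ∃ u, B *ᵥ u = x i • b i - A *ᵥ b i) :
    ∃ F : Matrix m ι K, ∀ i, (A + B * F) *ᵥ b i = x i • b i := by
  choose u hu using hu
  refine ⟨LinearMap.toMatrix' (b.constr K u), fun i => ?_⟩
  rw [add_mulVec, ← mulVec_mulVec, LinearMap.toMatrix'_mulVec, Module.Basis.constr_basis, hu]
  abel

section Complexification

variable {n m p : ℕ}

theorem mapC_add_mul (A : Matrix (Fin n) (Fin n) ℝ) (B : Matrix (Fin n) (Fin p) ℝ)
    (F : Matrix (Fin p) (Fin n) ℝ) : mapC (A + B * F) = mapC A + mapC B * mapC F := by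
  change (A + B * F).map Complex.ofRealHom = A.map Complex.ofRealHom +
    B.map Complex.ofRealHom * F.map Complex.ofRealHom
  rw [Matrix.map_add _ (map_add Complex.ofRealHom), Matrix.map_mul]

theorem mapC_mulVec (M : Matrix (Fin n) (Fin m) ℝ) (v : Fin m → ℝ) :
    mapC M *ᵥ (Complex.ofReal ∘ v) = Complex.ofReal ∘ (M *ᵥ v) :=
  funext fun i => (Complex.ofRealHom.map_mulVec M v i).symm

theorem ofReal_comp_vecMul_mapC (v : Fin n → ℝ) (M : Matrix (Fin n) (Fin m) ℝ) :
    (Complex.ofReal ∘ v) ᵥ* mapC M = Complex.ofReal ∘ (v ᵥ* M) :=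
  funext fun i => (Complex.ofRealHom.map_vecMul M v i).symm

theorem re_comp_mapC_mulVec (M : Matrix (Fin n) (Fin m) ℝ) (w : Fin m → ℂ) :
    Complex.re ∘ (mapC M *ᵥ w) = M *ᵥ (Complex.re ∘ w) := by
  funext i
  simp [mulVec, dotProduct, mapC, Complex.re_sum]

theorem mapC_evalCoeffs {q : ℕ} (C : ℕ → ℕ → Matrix (Fin n) (Fin q) ℝ) (N : ℕ) (x y : ℝ) :
    mapC (evalCoeffs C N x y) = evalCoeffs (fun k l => mapC (C k l)) N x y := by
  ext i j
  simp [evalCoeffs, mapC, Matrix.sum_apply]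

theorem ofReal_comp_col_mem_range_mapC {q : ℕ} (M : Matrix (Fin n) (Fin q) ℝ) (j : Fin q) :
    Complex.ofReal ∘ M.col j ∈ LinearMap.range (mapC M).mulVecLin :=
  ⟨Pi.single j 1, by rw [mulVecLin_apply, mulVec_single_one]; rfl⟩

theorem mem_Vsp_of_mulVec_eq {A : Matrix (Fin n) (Fin n) ℝ} {B : Matrix (Fin n) (Fin p) ℝ}
    {F : Matrix (Fin p) (Fin n) ℝ} {l : ℂ} {v : Fin n → ℂ}
    (h : mapC (A + B * F) *ᵥ v = l • v) : v ∈ Vsp A B l := by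
  refine ⟨mapC F *ᵥ v, ?_⟩
  simp only [mulVecLin_apply]
  rw [sub_mulVec, smul_mulVec, one_mulVec, ← h, mapC_add_mul, add_mulVec, ← mulVec_mulVec]
  abel

theorem exists_mulVec_eq_of_ofReal_comp_mem_Vsp {A : Matrix (Fin n) (Fin n) ℝ}
    {B : Matrix (Fin n) (Fin p) ℝ} {x : ℝ} {v : Fin n → ℝ}
    (h : Complex.ofReal ∘ v ∈ Vsp A B x) : ∃ u, B *ᵥ u = x • v - A *ᵥ v := by
  obtain ⟨w, hw⟩ := h
  refine ⟨Complex.re ∘ w, ?_⟩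
  have hlhs : ((x : ℂ) • (1 : Matrix (Fin n) (Fin n) ℂ) - mapC A) = mapC (x • 1 - A) := by
    ext i j
    by_cases hij : i = j <;> simp [mapC, hij]
  simp only [mulVecLin_apply] at hw
  rw [hlhs, mapC_mulVec] at hw
  rw [← re_comp_mapC_mulVec, hw, sub_mulVec, smul_mulVec, one_mulVec]
  rfl

end Complexification

section FeedbackRectifiable

variable {n p : ℕ} {A₁ A₂ : Matrix (Fin n) (Fin n) ℝ} {B₁ B₂ : Matrix (Fin n) (Fin p) ℝ}
  {D : Set (ℂ × ℂ)}

theorem FeedbackRectifiable.exists_linearIndependent_mem_Vsp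
    (h : FeedbackRectifiable A₁ A₂ B₁ B₂ D) :
    ∃ (lm : Fin n → ℂ × ℂ) (v : Fin n → Fin n → ℂ), (∀ i, lm i ∈ D) ∧
      LinearIndependent ℂ v ∧ ∀ i, v i ∈ Vsp A₁ B₁ (lm i).1 ⊓ Vsp A₂ B₂ (lm i).2 := by
  obtain ⟨F₁, F₂, lm, v, hlm, hv, h₁, h₂⟩ := h
  exact ⟨lm, v, hlm, hv, fun i => ⟨mem_Vsp_of_mulVec_eq (h₁ i), mem_Vsp_of_mulVec_eq (h₂ i)⟩⟩

theorem feedbackRectifiable_of_basis_mem_Vsp (b : Module.Basis (Fin n) ℝ (Fin n → ℝ))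
    (z : Fin n → ℝ × ℝ) (hz : ∀ i, (((z i).1 : ℂ), ((z i).2 : ℂ)) ∈ D)
    (hb : ∀ i, Complex.ofReal ∘ b i ∈ Vsp A₁ B₁ (z i).1 ⊓ Vsp A₂ B₂ (z i).2) :
    FeedbackRectifiable A₁ A₂ B₁ B₂ D := by
  obtain ⟨F₁, hF₁⟩ := exists_feedback_of_basis A₁ B₁ b (fun i => (z i).1) fun i =>
    exists_mulVec_eq_of_ofReal_comp_mem_Vsp (hb i).1
  obtain ⟨F₂, hF₂⟩ := exists_feedback_of_basis A₂ B₂ b (fun i => (z i).2) fun i =>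
    exists_mulVec_eq_of_ofReal_comp_mem_Vsp (hb i).2
  refine ⟨F₁, F₂, _, _, hz, b.linearIndependent.ofReal_comp, fun i => ?_, fun i => ?_⟩
  · rw [mapC_mulVec, hF₁]
    ext; simp
  · rw [mapC_mulVec, hF₂]
    ext; simp

end FeedbackRectifiable

theorem feedback_rectifiable_iff_coeff_kernel_general
    {n p r N : ℕ} (A₁ A₂ : Matrix (Fin n) (Fin n) ℝ) (B₁ B₂ : Matrix (Fin n) (Fin p) ℝ)
    (Ω : Set (ℂ × ℂ))
    (hΩdense : Dense {x : ℝ × ℝ | ((x.1 : ℂ), (x.2 : ℂ)) ∈ Ω})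
    (P : Matrix (Fin n) (Fin r) (MvPolynomial (Fin 2) ℝ))
    (hP : ∀ d ∈ Ω, LinearMap.range (evalPC P d.1 d.2).mulVecLin =
      Vsp A₁ B₁ d.1 ⊓ Vsp A₂ B₂ d.2)
    (C : ℕ → ℕ → Matrix (Fin n) (Fin r) ℝ)
    (hC : ∀ lam mu : ℂ, evalPC P lam mu =
      ∑ k ∈ Finset.range (N + 1), ∑ l ∈ Finset.range (N + 1),
        (lam ^ k * mu ^ l) • mapC (C k l)) :
    FeedbackRectifiable A₁ A₂ B₁ B₂ Ω ↔
    (∀ α : Fin n → ℝ, (∀ k l, k ≤ N → l ≤ N → Matrix.vecMul α (C k l) = 0) → α = 0) := by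
  have hPC (lam mu : ℂ) : evalPC P lam mu = evalCoeffs (fun k l => mapC (C k l)) N lam mu :=
    hC lam mu
  constructor
  · intro hFR α hα
    obtain ⟨lm, v, hlm, hv, hvV⟩ := hFR.exists_linearIndependent_mem_Vsp
    have hαP (lam mu : ℂ) : (Complex.ofReal ∘ α) ᵥ* evalPC P lam mu = 0 := by
      rw [hPC]
      refine vecMul_evalCoeffs_eq_zero (fun k l hk hl => ?_) lam mu
      rw [ofReal_comp_vecMul_mapC, hα k l hk hl]
      ext; simp
    have hαv (i : Fin n) : v i ⬝ᵥ (Complex.ofReal ∘ α) = 0 := by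
      obtain ⟨w, hw⟩ : v i ∈ LinearMap.range (evalPC P (lm i).1 (lm i).2).mulVecLin := by
        rw [hP _ (hlm i)]
        exact hvV i
      rw [← hw, mulVecLin_apply, dotProduct_comm, dotProduct_mulVec, hαP, zero_dotProduct]
    funext i
    simpa using congrFun (hv.eq_zero_of_forall_dotProduct_eq_zero hαv) i
  · intro hker
    obtain ⟨b, hb⟩ :=
      Module.Basis.exists_mem_of_span_eq_top (span_col_evalCoeffs_eq_top hΩdense hker)
    choose z hz j hbz using hb
    refine feedbackRectifiable_of_basis_mem_Vsp b z hz fun i => ?_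
    rw [← hP _ (hz i), hbz, hPC, ← mapC_evalCoeffs]
    exact ofReal_comp_col_mem_range_mapC _ _

/-- Let `Ω ⊆ (ℂ ∖ σ(A₁)) × (ℂ ∖ σ(A₂))` with `Ω ∩ (ℝ × ℝ)` dense in `ℝ × ℝ`, and let the
columns of the polynomial matrix `P` span `V_{A₁,B₁}(λ) ∩ V_{A₂,B₂}(μ)` on `Ω`, with real
coefficient matrices `C_{kl}`. Then the pairs are feedback rectifiable over `Ω` iff no
nonzero real `α` annihilates all the coefficient matrices. -/
theorem feedback_rectifiable_iff_coeff_kernel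
    {n p r N : ℕ} (A₁ A₂ : Matrix (Fin n) (Fin n) ℝ) (B₁ B₂ : Matrix (Fin n) (Fin p) ℝ)
    (Ω : Set (ℂ × ℂ))
    (hΩsub : ∀ d ∈ Ω, d.1 ∉ spectrum ℂ (mapC A₁) ∧ d.2 ∉ spectrum ℂ (mapC A₂))
    (hΩdense : Dense {x : ℝ × ℝ | ((x.1 : ℂ), (x.2 : ℂ)) ∈ Ω})
    (P : Matrix (Fin n) (Fin r) (MvPolynomial (Fin 2) ℝ))
    (hP : ∀ d ∈ Ω, LinearMap.range (evalPC P d.1 d.2).mulVecLin =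
      Vsp A₁ B₁ d.1 ⊓ Vsp A₂ B₂ d.2)
    (C : ℕ → ℕ → Matrix (Fin n) (Fin r) ℝ)
    (hC : ∀ lam mu : ℂ, evalPC P lam mu =
      ∑ k ∈ Finset.range (N + 1), ∑ l ∈ Finset.range (N + 1),
        (lam ^ k * mu ^ l) • mapC (C k l)) :
    FeedbackRectifiable A₁ A₂ B₁ B₂ Ω ↔
    (∀ α : Fin n → ℝ, (∀ k l, k ≤ N → l ≤ N → Matrix.vecMul α (C k l) = 0) → α = 0) :=
  feedback_rectifiable_iff_coeff_kernel_general A₁ A₂ B₁ B₂ Ω hΩdense P hP C hC
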